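/- arXiv:2211.03351 — 3 statements merged into one kernel-verified Lean document; each statement's English description precedes it below -/
import Mathlib

section
/- Let 0 < p ≤ 1 and ω ∈ D̂. Then limsup_{r→1⁻} (1-r)^{2-1/p} / ω̂(r)^{1/p} = 0 if and only if limsup_{r→1⁻} (1-r) Σ_{k=1}^∞ r^{2(k-1)} / (ω̂(1-1/k)^{1/p} k^{2-1/p}) = 0. -/
/-!
Put `F r = (1 - r) ^ (2 - 1/p) / ω̂(r) ^ (1/p)`. The `k`-th coefficient of the series is
`F (1 - 1/(k+1))`, so the series is the mean `(1 - r) ∑ₖ F (1 - 1/(k+1)) r ^ (2k)` of the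
samples of `F`. Because `ω̂` is nonincreasing, `F s ≥ c F r` whenever `r ≤ s` and
`1 - s ≥ (1 - r)/4`; summing over the `≈ 1/(1 - r)` indices with `1 - 1/(k+1)` in that range,
where `r ^ (2k) ≥ e⁻¹⁶`, gives `F r ≤ K · mean(r)`. Conversely, if the samples are eventually
`≤ ε`, the mean is eventually `≤ 2ε`. Hence boundedness and convergence to `0` at `1⁻` pass back
and forth between `F` and its mean, and a real `limsup` of a nonnegative function is `0` exactly
when the function is unbounded (junk value) or tends to `0`. The condition `ω ∈ D̂` only serves
to make the series converge: it bounds `1/ω̂(1 - 1/(k+1))` polynomially in `k`.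
-/

open MeasureTheory Set Filter Topology

lemma limsup_eq_zero_iff_of_eventually_nonneg {α : Type*} {l : Filter α} [l.NeBot]
    {h : α → ℝ} (hnn : ∀ᶠ x in l, 0 ≤ h x) :
    limsup h l = 0 ↔ (IsBoundedUnder (· ≤ ·) l h → Tendsto h l (𝓝 0)) := by
  refine ⟨fun h0 hb => ?_, fun himp => ?_⟩
  · exact tendsto_of_le_liminf_of_limsup_le (le_liminf_of_le hb.isCobounded_ge hnn) h0.le hb
      (isBoundedUnder_of_eventually_ge hnn)
  · by_cases hb : IsBoundedUnder (· ≤ ·) l h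
    · exact (himp hb).limsup_eq
    · exact Real.limsup_of_not_isBoundedUnder hb

lemma exp_neg_two_mul_le_pow {r c : ℝ} (hr : 1 / 2 ≤ r) (hr1 : r ≤ 1) {m : ℕ}
    (hm : m * (1 - r) ≤ c) : Real.exp (-2 * c) ≤ r ^ m := by
  have hr0 : 0 < r := by linarith
  have hlog : -(2 * (1 - r)) ≤ Real.log r := by
    have hinv : r * r⁻¹ = 1 := mul_inv_cancel₀ hr0.ne'
    nlinarith [Real.one_sub_inv_le_log_of_pos hr0]
  rw [← Real.exp_log hr0, ← Real.exp_nat_mul]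
  exact Real.exp_le_exp.2 (by nlinarith)

lemma min_rpow_mul_rpow_le {x y b : ℝ} (e : ℝ) (hy : 0 < y) (hyx : y ≤ x) (hxy : x ≤ b * y) :
    min (b ^ (-e)) 1 * x ^ e ≤ y ^ e := by
  have hb : 0 < b := by nlinarith
  have hx : 0 ≤ x ^ e := Real.rpow_nonneg (hy.le.trans hyx) e
  rcases le_or_gt 0 e with he | he
  · calc min (b ^ (-e)) 1 * x ^ e ≤ b ^ (-e) * x ^ e :=
        mul_le_mul_of_nonneg_right (min_le_left _ _) hx
      _ = (x / b) ^ e := by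
          rw [Real.div_rpow (by linarith) hb.le, Real.rpow_neg hb.le, div_eq_mul_inv, mul_comm]
      _ ≤ y ^ e := Real.rpow_le_rpow (div_nonneg (by linarith) hb.le)
          (div_le_of_le_mul₀ hb.le hy.le (by linarith)) he
  · calc min (b ^ (-e)) 1 * x ^ e ≤ 1 * x ^ e :=
        mul_le_mul_of_nonneg_right (min_le_right _ _) hx
      _ ≤ y ^ e := by rw [one_mul]; exact Real.rpow_le_rpow_of_nonpos hy hyx he.le

lemma summable_add_one_rpow_mul_geometric {x : ℝ} (γ : ℝ) (hx0 : 0 ≤ x) (hx1 : x < 1) :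
    Summable fun n : ℕ => ((n : ℝ) + 1) ^ γ * x ^ n := by
  obtain ⟨M, hM⟩ : ∃ M : ℕ, γ ≤ M := ⟨⌈γ⌉₊, Nat.le_ceil γ⟩
  have hx : ‖x‖ < 1 := by rwa [Real.norm_of_nonneg hx0]
  have hgeom : Summable fun n : ℕ => (2 : ℝ) ^ M * ((n : ℝ) ^ M * x ^ n) :=
    (summable_pow_mul_geometric_of_norm_lt_one M hx).mul_left _
  refine Summable.of_norm_bounded_eventually_nat hgeom ?_
  filter_upwards [eventually_ge_atTop 1] with n hn
  have hn' : (1 : ℝ) ≤ n := by exact_mod_cast hn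
  have hxn : 0 ≤ x ^ n := pow_nonneg hx0 n
  rw [Real.norm_of_nonneg (mul_nonneg (Real.rpow_nonneg (by linarith) γ) hxn)]
  calc ((n : ℝ) + 1) ^ γ * x ^ n ≤ ((n : ℝ) + 1) ^ M * x ^ n := by
        refine mul_le_mul_of_nonneg_right ?_ hxn
        rw [← Real.rpow_natCast]
        exact Real.rpow_le_rpow_of_exponent_le (by linarith) hM
    _ ≤ (2 * n) ^ M * x ^ n := by gcongr; linarith
    _ = 2 ^ M * ((n : ℝ) ^ M * x ^ n) := by ring

noncomputable def abelMean (a : ℕ → ℝ) (r : ℝ) : ℝ := (1 - r) * ∑' k, r ^ (2 * k) * a k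

section AbelMean

variable {a : ℕ → ℝ}

lemma abelMean_nonneg (ha : ∀ k, 0 ≤ a k) {r : ℝ} (hr0 : 0 ≤ r) (hr1 : r ≤ 1) :
    0 ≤ abelMean a r :=
  mul_nonneg (by linarith) (tsum_nonneg fun k => mul_nonneg (by positivity) (ha k))

lemma abelMean_le_sum_range_add (ha : ∀ k, 0 ≤ a k) {K : ℕ} {ε : ℝ} (hε : 0 ≤ ε)
    (haε : ∀ k ≥ K, a k ≤ ε) {r : ℝ} (hr0 : 0 ≤ r) (hr1 : r < 1) :
    abelMean a r ≤ (1 - r) * ∑ k ∈ Finset.range K, a k + ε := by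
  have hr2 : r ^ 2 < 1 := by nlinarith
  have hgeom : Summable fun i : ℕ => ε * (r ^ 2) ^ i :=
    (summable_geometric_of_lt_one (by positivity) hr2).mul_left ε
  have hterm : ∀ i, r ^ (2 * (i + K)) * a (i + K) ≤ ε * (r ^ 2) ^ i := fun i =>
    calc r ^ (2 * (i + K)) * a (i + K) ≤ r ^ (2 * i) * ε :=
          mul_le_mul (pow_le_pow_of_le_one hr0 hr1.le (by omega)) (haε _ (by omega)) (ha _)
            (by positivity)
      _ = ε * (r ^ 2) ^ i := by rw [pow_mul]; ring
  have htail : Summable fun i => r ^ (2 * (i + K)) * a (i + K) :=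
    hgeom.of_nonneg_of_le (fun i => mul_nonneg (by positivity) (ha _)) hterm
  have hhead : ∑ k ∈ Finset.range K, r ^ (2 * k) * a k ≤ ∑ k ∈ Finset.range K, a k :=
    Finset.sum_le_sum fun k _ => mul_le_of_le_one_left (ha k) (pow_le_one₀ hr0 hr1.le)
  have htail_le : ∑' i, r ^ (2 * (i + K)) * a (i + K) ≤ ε / (1 - r ^ 2) := by
    calc ∑' i, r ^ (2 * (i + K)) * a (i + K) ≤ ∑' i : ℕ, ε * (r ^ 2) ^ i :=
          htail.tsum_le_tsum hterm hgeom
      _ = ε / (1 - r ^ 2) := by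
          rw [tsum_mul_left, tsum_geometric_of_lt_one (by positivity) hr2, div_eq_mul_inv]
  have hfactor : (1 - r) * (ε / (1 - r ^ 2)) ≤ ε := by
    rw [mul_div_assoc', div_le_iff₀ (by nlinarith)]
    nlinarith [mul_nonneg hε (mul_nonneg (sub_nonneg.2 hr1.le) hr0)]
  calc abelMean a r
      = (1 - r) * (∑ k ∈ Finset.range K, r ^ (2 * k) * a k
          + ∑' i, r ^ (2 * (i + K)) * a (i + K)) := by
        rw [abelMean, ((summable_nat_add_iff K).mp htail).sum_add_tsum_nat_add K]
    _ ≤ (1 - r) * (∑ k ∈ Finset.range K, a k + ε / (1 - r ^ 2)) := by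
        gcongr
    _ ≤ (1 - r) * ∑ k ∈ Finset.range K, a k + ε := by linarith

lemma eventually_abelMean_le (ha : ∀ k, 0 ≤ a k) {ε : ℝ} (hε : 0 < ε)
    (haε : ∀ᶠ k in atTop, a k ≤ ε) : ∀ᶠ r in 𝓝[<] (1 : ℝ), abelMean a r ≤ 2 * ε := by
  obtain ⟨K, hK⟩ := eventually_atTop.mp haε
  have hhead :
      Tendsto (fun r : ℝ => (1 - r) * ∑ k ∈ Finset.range K, a k) (𝓝[<] 1) (𝓝 0) := by
    have : Continuous fun r : ℝ => (1 - r) * ∑ k ∈ Finset.range K, a k := by fun_prop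
    simpa using (this.tendsto 1).mono_left nhdsWithin_le_nhds
  filter_upwards [hhead.eventually (eventually_le_nhds hε), Ioo_mem_nhdsLT one_pos]
    with r h1 hr
  linarith [abelMean_le_sum_range_add ha hε.le hK hr.1.le hr.2]

lemma tendsto_abelMean_zero (ha : ∀ k, 0 ≤ a k) (ha0 : Tendsto a atTop (𝓝 0)) :
    Tendsto (abelMean a) (𝓝[<] 1) (𝓝 0) := by
  refine tendsto_order.2 ⟨fun b hb => ?_, fun b hb => ?_⟩
  · filter_upwards [Ioo_mem_nhdsLT one_pos] with r hr
    exact hb.trans_le (abelMean_nonneg ha hr.1.le hr.2.le)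
  · have hb4 : 0 < b / 4 := by linarith
    filter_upwards [eventually_abelMean_le ha hb4 (ha0.eventually (eventually_le_nhds hb4))]
      with r hr
    linarith

lemma isBoundedUnder_abelMean (ha : ∀ k, 0 ≤ a k) (hbdd : IsBoundedUnder (· ≤ ·) atTop a) :
    IsBoundedUnder (· ≤ ·) (𝓝[<] 1) (abelMean a) := by
  obtain ⟨B, hB⟩ := hbdd.eventually_le
  exact isBoundedUnder_of_eventually_le <| eventually_abelMean_le ha
    (lt_of_lt_of_le one_pos (le_max_right B 1)) (hB.mono fun k hk => hk.trans (le_max_left B 1))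

lemma le_abelMean_of_le_on_block (ha : ∀ k, 0 ≤ a k) {r c : ℝ} (hr : 1 / 2 ≤ r)
    (hr1 : r < 1) (hsum : Summable fun k => r ^ (2 * k) * a k) (hc : 0 ≤ c)
    (hblock : ∀ k : ℕ, 1 ≤ (1 - r) * (k + 1) → (1 - r) * (k + 1) ≤ 4 → c ≤ a k) :
    Real.exp (-16) * c ≤ abelMean a r := by
  have h1r : 0 < 1 - r := by linarith
  set N := ⌈(1 - r)⁻¹⌉₊
  have hN : 1 ≤ (1 - r) * N := by
    calc (1 : ℝ) = (1 - r) * (1 - r)⁻¹ := (mul_inv_cancel₀ h1r.ne').symm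
      _ ≤ (1 - r) * N := mul_le_mul_of_nonneg_left (Nat.le_ceil _) h1r.le
  have hN' : (1 - r) * N ≤ 2 := by
    have : (N : ℝ) < (1 - r)⁻¹ + 1 := Nat.ceil_lt_add_one (by positivity)
    have : (1 - r) * (1 - r)⁻¹ = 1 := mul_inv_cancel₀ h1r.ne'
    nlinarith
  have hterm : ∀ k ∈ Finset.Ico N (2 * N), Real.exp (-16) * c ≤ r ^ (2 * k) * a k := by
    intro k hk
    obtain ⟨hNk, hk2N⟩ := Finset.mem_Ico.mp hk
    have hk1 : (N : ℝ) ≤ k := by exact_mod_cast hNk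
    have hk2 : (k : ℝ) + 1 ≤ 2 * N := by exact_mod_cast hk2N
    have hpow : Real.exp (-16) ≤ r ^ (2 * k) := by
      convert exp_neg_two_mul_le_pow hr hr1.le (m := 2 * k) (c := 8)
        (by push_cast; nlinarith) using 2
      norm_num
    exact mul_le_mul hpow (hblock k (by nlinarith) (by nlinarith)) hc (by positivity)
  have hcard : ((Finset.Ico N (2 * N)).card : ℝ) = N := by
    rw [Nat.card_Ico]; push_cast [show 2 * N - N = N by omega]; ring
  calc Real.exp (-16) * c ≤ (1 - r) * N * (Real.exp (-16) * c) :=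
        le_mul_of_one_le_left (by positivity) hN
    _ = (1 - r) * ((Finset.Ico N (2 * N)).card • (Real.exp (-16) * c)) := by
        rw [nsmul_eq_mul, hcard]; ring
    _ ≤ (1 - r) * ∑ k ∈ Finset.Ico N (2 * N), r ^ (2 * k) * a k := by
        gcongr
        exact Finset.card_nsmul_le_sum _ _ _ hterm
    _ ≤ abelMean a r := mul_le_mul_of_nonneg_left
        (hsum.sum_le_tsum _ fun k _ => mul_nonneg (by positivity) (ha k)) h1r.le

end AbelMean

lemma tendsto_one_sub_one_div_add_one_nhdsLT :
    Tendsto (fun k : ℕ => 1 - 1 / ((k : ℝ) + 1)) atTop (𝓝[<] 1) := by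
  refine tendsto_nhdsWithin_of_tendsto_nhds_of_eventually_within _ ?_ ?_
  · simpa using (tendsto_one_div_add_atTop_nhds_zero_nat (𝕜 := ℝ)).const_sub 1
  · exact Eventually.of_forall fun k => by
      simp only [mem_Iio]; linarith [Nat.one_div_pos_of_nat (α := ℝ) (n := k)]

lemma one_sub_one_div_add_one_mem_Ico (k : ℕ) : 1 - 1 / ((k : ℝ) + 1) ∈ Ico (0 : ℝ) 1 := by
  have hk : (1 : ℝ) ≤ k + 1 := by linarith [k.cast_nonneg (α := ℝ)]
  exact ⟨by linarith [(div_le_one (by linarith)).2 hk],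
    by linarith [Nat.one_div_pos_of_nat (α := ℝ) (n := k)]⟩

theorem limsup_eq_zero_iff_limsup_abelMean_eq_zero {F : ℝ → ℝ}
    (hF : ∀ r ∈ Ico (0 : ℝ) 1, 0 ≤ F r) {c : ℝ} (hc : 0 < c)
    (hcomp : ∀ r s, 0 ≤ r → r ≤ s → s < 1 → 1 - r ≤ 4 * (1 - s) → c * F r ≤ F s)
    (hsum : ∀ r ∈ Ico (0 : ℝ) 1, Summable fun k : ℕ => r ^ (2 * k) * F (1 - 1 / (k + 1))) :
    limsup F (𝓝[<] 1) = 0 ↔ limsup (abelMean fun k => F (1 - 1 / (k + 1))) (𝓝[<] 1) = 0 := by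
  set a : ℕ → ℝ := fun k => F (1 - 1 / (k + 1))
  have ha : ∀ k, 0 ≤ a k := fun k => hF _ (one_sub_one_div_add_one_mem_Ico k)
  have hIco : Ico (0 : ℝ) 1 ∈ 𝓝[<] 1 :=
    mem_of_superset (Ioo_mem_nhdsLT one_pos) Ioo_subset_Ico_self
  have hFnn : ∀ᶠ r in 𝓝[<] 1, 0 ≤ F r := eventually_of_mem hIco hF
  have hGnn : ∀ᶠ r in 𝓝[<] 1, 0 ≤ abelMean a r :=
    eventually_of_mem hIco fun r hr => abelMean_nonneg ha hr.1 hr.2.le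
  set K := (Real.exp (-16) * c)⁻¹
  have hFG : ∀ᶠ r in 𝓝[<] 1, F r ≤ K * abelMean a r := by
    filter_upwards [Ioo_mem_nhdsLT (show (1 / 2 : ℝ) < 1 by norm_num)] with r hr
    rw [le_inv_mul_iff₀ (by positivity), mul_assoc]
    refine le_abelMean_of_le_on_block ha hr.1.le hr.2 (hsum r ⟨by linarith [hr.1], hr.2⟩)
      (mul_nonneg hc.le (hF r ⟨by linarith [hr.1], hr.2⟩)) fun k hk1 hk4 => ?_
    have hk : (0 : ℝ) < k + 1 := by positivity
    refine hcomp r _ (by linarith [hr.1]) ?_ (one_sub_one_div_add_one_mem_Ico k).2 ?_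
    · have : 1 / ((k : ℝ) + 1) ≤ 1 - r := by rw [div_le_iff₀ hk]; linarith
      linarith
    · rw [sub_sub_cancel, mul_one_div, le_div_iff₀ hk]; linarith
  rw [limsup_eq_zero_iff_of_eventually_nonneg hFnn, limsup_eq_zero_iff_of_eventually_nonneg hGnn]
  constructor
  · intro hF0 hGbdd
    obtain ⟨B, hB⟩ := hGbdd.eventually_le
    have hFbdd : IsBoundedUnder (· ≤ ·) (𝓝[<] 1) F := by
      refine isBoundedUnder_of_eventually_le (a := K * B) ?_
      filter_upwards [hFG, hB] with r h1 h2
      exact h1.trans (mul_le_mul_of_nonneg_left h2 (by positivity))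
    exact tendsto_abelMean_zero ha ((hF0 hFbdd).comp tendsto_one_sub_one_div_add_one_nhdsLT)
  · intro hG0 hFbdd
    have hGbdd := isBoundedUnder_abelMean ha
      (tendsto_one_sub_one_div_add_one_nhdsLT.isBoundedUnder_comp hFbdd)
    exact squeeze_zero' hFnn hFG (by simpa using (hG0 hGbdd).const_mul K)

lemma antitoneOn_setIntegral_Ioc_one {ω : ℝ → ℝ} (hnn : ∀ r, 0 ≤ ω r)
    (hInt : IntegrableOn ω (Ico 0 1)) : AntitoneOn (fun r => ∫ s in Ioc r 1, ω s) (Ici 0) := by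
  intro r hr s _ hrs
  have hIcc : IntegrableOn ω (Icc 0 1) := (integrableOn_Icc_iff_integrableOn_Ico).2 hInt
  exact setIntegral_mono_set (hIcc.mono_set (Ioc_subset_Icc_self.trans (Icc_subset_Icc_left hr)))
    (Eventually.of_forall hnn) (Ioc_subset_Ioc_left hrs).eventuallyLE

section Doubling

variable {W : ℝ → ℝ} {C : ℝ}

lemma le_pow_mul_one_sub_half_pow (hC : 0 ≤ C)
    (hD : ∀ r ∈ Ico (0 : ℝ) 1, W r ≤ C * W ((1 + r) / 2)) (n : ℕ) :
    W 0 ≤ C ^ n * W (1 - (1 / 2) ^ n) := by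
  induction n with
  | zero => simp
  | succ n ih =>
    have hmem : 1 - (1 / 2 : ℝ) ^ n ∈ Ico (0 : ℝ) 1 :=
      ⟨by linarith [pow_le_one₀ (n := n) (by norm_num : (0 : ℝ) ≤ 1 / 2) (by norm_num)],
        by linarith [pow_pos (by norm_num : (0 : ℝ) < 1 / 2) n]⟩
    have hstep : W (1 - (1 / 2) ^ n) ≤ C * W (1 - (1 / 2) ^ (n + 1)) := by
      convert hD _ hmem using 3; ring
    calc W 0 ≤ C ^ n * W (1 - (1 / 2) ^ n) := ih
      _ ≤ C ^ n * (C * W (1 - (1 / 2) ^ (n + 1))) := by gcongr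
      _ = C ^ (n + 1) * W (1 - (1 / 2) ^ (n + 1)) := by ring

lemma le_mul_pow_mul_of_doubling (hC : 0 ≤ C)
    (hD : ∀ r ∈ Ico (0 : ℝ) 1, W r ≤ C * W ((1 + r) / 2)) (hanti : AntitoneOn W (Ico 0 1))
    (hnn : ∀ r ∈ Ico (0 : ℝ) 1, 0 ≤ W r) {E : ℕ} (hE : C ≤ 2 ^ E) (k : ℕ) :
    W 0 ≤ C * ((k : ℝ) + 1) ^ E * W (1 - 1 / ((k : ℝ) + 1)) := by
  set n := Nat.log 2 (k + 1)
  have hlow : (2 : ℝ) ^ n ≤ k + 1 := by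
    exact_mod_cast Nat.pow_log_le_self 2 (Nat.succ_ne_zero k)
  have hup : (k : ℝ) + 1 ≤ 2 ^ (n + 1) := by
    exact_mod_cast (Nat.lt_pow_succ_log_self one_lt_two (k + 1)).le
  have hmem : 1 - (1 / 2 : ℝ) ^ (n + 1) ∈ Ico (0 : ℝ) 1 :=
    ⟨by linarith [pow_le_one₀ (n := n + 1) (by norm_num : (0 : ℝ) ≤ 1 / 2) (by norm_num)],
      by linarith [pow_pos (by norm_num : (0 : ℝ) < 1 / 2) (n + 1)]⟩
  have hle : 1 - 1 / ((k : ℝ) + 1) ≤ 1 - (1 / 2) ^ (n + 1) := by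
    rw [one_div_pow]; gcongr
  have hpow : C ^ (n + 1) ≤ C * ((k : ℝ) + 1) ^ E :=
    calc C ^ (n + 1) = C * C ^ n := by ring
      _ ≤ C * ((2 : ℝ) ^ E) ^ n := by gcongr
      _ = C * ((2 : ℝ) ^ n) ^ E := by rw [← pow_mul, ← pow_mul, mul_comm E]
      _ ≤ C * ((k : ℝ) + 1) ^ E := by gcongr
  calc W 0 ≤ C ^ (n + 1) * W (1 - (1 / 2) ^ (n + 1)) := le_pow_mul_one_sub_half_pow hC hD _
    _ ≤ C * ((k : ℝ) + 1) ^ E * W (1 - 1 / ((k : ℝ) + 1)) :=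
        mul_le_mul hpow (hanti (one_sub_one_div_add_one_mem_Ico k) hmem hle) (hnn _ hmem)
          (by positivity)

end Doubling

section TailRatio

variable {W : ℝ → ℝ} {e q : ℝ}

lemma min_mul_rpow_div_rpow_le (hanti : AntitoneOn W (Ico 0 1))
    (hpos : ∀ r ∈ Ico (0 : ℝ) 1, 0 < W r) (hq : 0 ≤ q) {r s : ℝ} (hr : 0 ≤ r) (hrs : r ≤ s)
    (hs : s < 1) (h4 : 1 - r ≤ 4 * (1 - s)) :
    min (4 ^ (-e)) 1 * ((1 - r) ^ e / W r ^ q) ≤ (1 - s) ^ e / W s ^ q := by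
  have hWs := hpos s ⟨hr.trans hrs, hs⟩
  rw [← mul_div_assoc]
  exact div_le_div₀ (Real.rpow_nonneg (by linarith) _)
    (min_rpow_mul_rpow_le e (by linarith) (by linarith) h4) (Real.rpow_pos_of_pos hWs _)
    (Real.rpow_le_rpow hWs.le (hanti ⟨hr, hrs.trans_lt hs⟩ ⟨hr.trans hrs, hs⟩ hrs) hq)

lemma exists_rpow_div_rpow_le_mul_rpow {C : ℝ} (hC : 0 ≤ C)
    (hD : ∀ r ∈ Ico (0 : ℝ) 1, W r ≤ C * W ((1 + r) / 2)) (hanti : AntitoneOn W (Ico 0 1))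
    (hpos : ∀ r ∈ Ico (0 : ℝ) 1, 0 < W r) (hq : 0 ≤ q) :
    ∃ A γ : ℝ, ∀ k : ℕ, (1 - (1 - 1 / ((k : ℝ) + 1))) ^ e / W (1 - 1 / ((k : ℝ) + 1)) ^ q
      ≤ A * ((k : ℝ) + 1) ^ γ := by
  obtain ⟨E, hE⟩ : ∃ E : ℕ, C ≤ 2 ^ E :=
    (pow_unbounded_of_one_lt C one_lt_two).imp fun _ h => h.le
  have hW0 := hpos 0 ⟨le_rfl, one_pos⟩
  refine ⟨(C / W 0) ^ q, E * q - e, fun k => ?_⟩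
  have hk : (0 : ℝ) < k + 1 := by positivity
  have hWk := hpos _ (one_sub_one_div_add_one_mem_Ico k)
  have hinv : (W (1 - 1 / ((k : ℝ) + 1)))⁻¹ ≤ C / W 0 * ((k : ℝ) + 1) ^ E := by
    rw [div_mul_eq_mul_div, le_div_iff₀ hW0, inv_mul_le_iff₀ hWk, mul_comm]
    exact le_mul_pow_mul_of_doubling hC hD hanti (fun r hr => (hpos r hr).le) hE k
  calc (1 - (1 - 1 / ((k : ℝ) + 1))) ^ e / W (1 - 1 / ((k : ℝ) + 1)) ^ q
      = ((k : ℝ) + 1) ^ (-e) * (W (1 - 1 / ((k : ℝ) + 1)))⁻¹ ^ q := by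
        rw [sub_sub_cancel, Real.div_rpow zero_le_one hk.le, Real.one_rpow, Real.rpow_neg hk.le,
          Real.inv_rpow hWk.le, one_div, div_eq_mul_inv]
    _ ≤ ((k : ℝ) + 1) ^ (-e) * (C / W 0 * ((k : ℝ) + 1) ^ E) ^ q := by
        gcongr
    _ = (C / W 0) ^ q * ((k : ℝ) + 1) ^ (E * q - e) := by
        rw [Real.mul_rpow (by positivity) (by positivity), ← Real.rpow_natCast,
          ← Real.rpow_mul hk.le, sub_eq_add_neg, Real.rpow_add hk]
        ring

theorem limsup_rpow_div_rpow_eq_zero_iff (hanti : AntitoneOn W (Ico 0 1))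
    (hpos : ∀ r ∈ Ico (0 : ℝ) 1, 0 < W r)
    (hD : ∃ C ≥ (0 : ℝ), ∀ r ∈ Ico (0 : ℝ) 1, W r ≤ C * W ((1 + r) / 2)) (hq : 0 ≤ q) :
    limsup (fun r => (1 - r) ^ e / W r ^ q) (𝓝[<] 1) = 0 ↔
      limsup (abelMean fun k =>
          (1 - (1 - 1 / ((k : ℝ) + 1))) ^ e / W (1 - 1 / ((k : ℝ) + 1)) ^ q) (𝓝[<] 1) = 0 := by
  obtain ⟨C, hC, hDC⟩ := hD
  obtain ⟨A, γ, hAγ⟩ := exists_rpow_div_rpow_le_mul_rpow hC hDC hanti hpos hq (e := e)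
  have hnn : ∀ r ∈ Ico (0 : ℝ) 1, 0 ≤ (1 - r) ^ e / W r ^ q := fun r hr =>
    div_nonneg (Real.rpow_nonneg (by linarith [hr.2]) _) (Real.rpow_nonneg (hpos r hr).le _)
  refine limsup_eq_zero_iff_limsup_abelMean_eq_zero hnn (by positivity)
    (fun r s hr hrs hs h4 => min_mul_rpow_div_rpow_le hanti hpos hq hr hrs hs h4)
    fun r hr => ?_
  have hr2 : r ^ 2 < 1 := by nlinarith [hr.1, hr.2]
  refine ((summable_add_one_rpow_mul_geometric γ (sq_nonneg r) hr2).mul_left A).of_nonneg_of_le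
    (fun k => mul_nonneg (pow_nonneg hr.1 _) (hnn _ (one_sub_one_div_add_one_mem_Ico k)))
    fun k => ?_
  calc r ^ (2 * k) * ((1 - (1 - 1 / ((k : ℝ) + 1))) ^ e / W (1 - 1 / ((k : ℝ) + 1)) ^ q)
      ≤ r ^ (2 * k) * (A * ((k : ℝ) + 1) ^ γ) :=
        mul_le_mul_of_nonneg_left (hAγ k) (pow_nonneg hr.1 _)
    _ = A * (((k : ℝ) + 1) ^ γ * (r ^ 2) ^ k) := by rw [pow_mul]; ring

end TailRatio

theorem stmt_12_general (p : ℝ) (hp : 0 < p)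
    (ω : ℝ → ℝ) (hnn : ∀ r, 0 ≤ ω r)
    (hInt : IntegrableOn ω (Set.Ico (0:ℝ) 1))
    (What : ℝ → ℝ) (hWhat : ∀ r, What r = ∫ s in Set.Ioc r 1, ω s)
    (hpos : ∀ r ∈ Set.Ico (0:ℝ) 1, 0 < What r)
    (hD : ∃ C ≥ (1:ℝ), ∀ r ∈ Set.Ico (0:ℝ) 1, What r ≤ C * What ((1 + r) / 2)) :
    (Filter.limsup (fun r : ℝ => (1 - r) ^ (2 - 1/p) / What r ^ (1/p))
        (nhdsWithin 1 (Set.Iio 1)) = 0) ↔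
    (Filter.limsup (fun r : ℝ =>
        (1 - r) * (∑' k : ℕ, r ^ (2 * k) /
          (What (1 - 1 / ((k : ℝ) + 1)) ^ (1/p) * ((k : ℝ) + 1) ^ (2 - 1/p))))
        (nhdsWithin 1 (Set.Iio 1)) = 0) := by
  have hanti : AntitoneOn What (Ico 0 1) := by
    rw [funext hWhat]
    exact (antitoneOn_setIntegral_Ioc_one hnn hInt).mono Ico_subset_Ici_self
  obtain ⟨C, hC, hDC⟩ := hD
  convert limsup_rpow_div_rpow_eq_zero_iff (e := 2 - 1 / p) hanti hpos ⟨C, by linarith, hDC⟩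
    (one_div_pos.2 hp).le using 3
  funext r
  refine congrArg _ (tsum_congr fun k => ?_)
  dsimp only
  rw [sub_sub_cancel (1 : ℝ), Real.div_rpow zero_le_one (by positivity), Real.one_rpow]
  ring

/-- For 0 < p ≤ 1 and ω ∈ D̂: limsup_{r→1⁻} (1-r)^{2-1/p}/ω̂(r)^{1/p} = 0 iff
limsup_{r→1⁻} (1-r) Σ_{k≥1} r^{2(k-1)}/(ω̂(1-1/k)^{1/p} k^{2-1/p}) = 0. -/
theorem stmt_12 (p : ℝ) (hp : 0 < p) (hp1 : p ≤ 1)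
    (ω : ℝ → ℝ) (hnn : ∀ r, 0 ≤ ω r)
    (hInt : IntegrableOn ω (Set.Ico (0:ℝ) 1))
    (What : ℝ → ℝ) (hWhat : ∀ r, What r = ∫ s in Set.Ioc r 1, ω s)
    (hpos : ∀ r ∈ Set.Ico (0:ℝ) 1, 0 < What r)
    (hD : ∃ C ≥ (1:ℝ), ∀ r ∈ Set.Ico (0:ℝ) 1, What r ≤ C * What ((1 + r) / 2)) :
    (Filter.limsup (fun r : ℝ => (1 - r) ^ (2 - 1/p) / What r ^ (1/p))
        (nhdsWithin 1 (Set.Iio 1)) = 0) ↔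
    (Filter.limsup (fun r : ℝ =>
        (1 - r) * (∑' k : ℕ, r ^ (2 * k) /
          (What (1 - 1 / ((k : ℝ) + 1)) ^ (1/p) * ((k : ℝ) + 1) ^ (2 - 1/p))))
        (nhdsWithin 1 (Set.Iio 1)) = 0) :=
  stmt_12_general p hp ω hnn hInt What hWhat hpos hD
end

section
/- Let ω ∈ D̂. Then sup_{0≤r<1} (1-r)/ω̂(r) < ∞ if and only if sup_{0≤r<1} (1-r) Σ_{k=1}^∞ r^k / ((k+1) ω_k) < ∞, where ω_k = ∫_0^1 s^k ω(s) ds. -/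
/-!
The moments are comparable to the tail. On the one hand `ω_n ≥ a^n ω̂(a)` for every `a`. On the
other hand, for `ω ∈ D̂`, `ω_n ≲ ω̂(r)` as soon as `n (1 - r) ≥ 1`: split `(0, 1]` at the dyadic
points `1 - 2^{-j}`; going down one dyadic step costs a factor `C` in `ω̂` by the doubling
condition, while `s^n` decays like `exp(-n 2^{-j})`, so the pieces are summable.

With `a = 1 - 1/(k+2)` the first bound dominates the series by a multiple of `Σ r^k = 1/(1-r)`.
Conversely, each of the `N ≈ 1/(1-r)` terms with `N ≤ k < 2N` is at least a multiple of
`1/(N ω̂(r))`, so `(1 - r) Σ ≳ (1 - r)/ω̂(r)`.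
-/

open MeasureTheory Set Real
open scoped Nat

theorem one_sub_pow_le_exp_neg {x : ℝ} (hx : x ≤ 1) (n : ℕ) : (1 - x) ^ n ≤ exp (-(n * x)) := by
  calc (1 - x) ^ n ≤ exp (-x) ^ n := pow_le_pow_left₀ (by linarith) (one_sub_le_exp_neg x) n
  _ = exp (-(n * x)) := by rw [← exp_nat_mul]; ring_nf

theorem exp_neg_two_mul_le_one_sub {x : ℝ} (hx0 : 0 ≤ x) (hx : x ≤ 2⁻¹) :
    exp (-(2 * x)) ≤ 1 - x := by
  rw [exp_neg, inv_le_iff_one_le_mul₀ (exp_pos _)]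
  nlinarith [add_one_le_exp (2 * x)]

theorem exp_neg_le_one_sub_pow {x : ℝ} (hx0 : 0 ≤ x) (hx : x ≤ 2⁻¹) (n : ℕ) :
    exp (-(2 * n * x)) ≤ (1 - x) ^ n := by
  calc exp (-(2 * n * x)) = exp (-(2 * x)) ^ n := by rw [← exp_nat_mul]; ring_nf
  _ ≤ (1 - x) ^ n := pow_le_pow_left₀ (exp_pos _).le (exp_neg_two_mul_le_one_sub hx0 hx) n

theorem exists_pow_mul_exp_neg_le {C : ℝ} (hC : 0 ≤ C) :
    ∃ L, 0 ≤ L ∧ ∀ i : ℕ, C ^ (i + 1) * exp (-(2 ^ i / 2)) ≤ L * 2⁻¹ ^ i := by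
  -- `exp x ≥ x^p / p!` with `2 C < 2^p`
  obtain ⟨p, hp⟩ := pow_unbounded_of_one_lt (2 * C) one_lt_two
  refine ⟨C * 2 ^ p * p !, by positivity, fun i => ?_⟩
  have hexp : exp (-(2 ^ i / 2)) ≤ p ! * 2 ^ p / (2 ^ p) ^ i := by
    rw [exp_neg, inv_le_comm₀ (exp_pos _) (by positivity)]
    calc (p ! * 2 ^ p / (2 ^ p) ^ i : ℝ)⁻¹ = (2 ^ i / 2) ^ p / p ! := by
          rw [div_pow, ← pow_mul, ← pow_mul, mul_comm p i]; field_simp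
    _ ≤ exp (2 ^ i / 2) := Real.pow_div_factorial_le_exp _ (by positivity) p
  have hratio : C / 2 ^ p ≤ 2⁻¹ := by rw [div_le_iff₀ (by positivity)]; linarith
  calc C ^ (i + 1) * exp (-(2 ^ i / 2)) ≤ C ^ (i + 1) * (p ! * 2 ^ p / (2 ^ p) ^ i) := by gcongr
  _ = C * 2 ^ p * p ! * (C / 2 ^ p) ^ i := by rw [div_pow]; field_simp; ring
  _ ≤ C * 2 ^ p * p ! * 2⁻¹ ^ i := by gcongr

namespace RadialWeight

-- `tail ω r` is the paper's `ω̂(r)` and `moment ω n` its `ω_n`.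
noncomputable def tail (ω : ℝ → ℝ) (r : ℝ) : ℝ := ∫ s in Ioc r 1, ω s

noncomputable def moment (ω : ℝ → ℝ) (n : ℕ) : ℝ := ∫ s in Ioc 0 1, s ^ n * ω s

-- The paper's `Σ_{k ≥ 1} r^k / ((k + 1) ω_k)`, reindexed from `k = 0`.
noncomputable def series (ω : ℝ → ℝ) (r : ℝ) : ℝ :=
  ∑' k : ℕ, r ^ (k + 1) / (((k : ℝ) + 2) * moment ω (k + 1))

variable {ω : ℝ → ℝ}

theorem integrableOn_Ioc_of_Ico (hωi : IntegrableOn ω (Ico 0 1)) {a b : ℝ} (ha : 0 ≤ a)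
    (hb : b ≤ 1) : IntegrableOn ω (Ioc a b) :=
  ((integrableOn_Icc_iff_integrableOn_Ico (f := ω)).2 hωi).mono_set
    (Ioc_subset_Icc_self.trans (Icc_subset_Icc ha hb))

theorem integrableOn_pow_mul (hωi : IntegrableOn ω (Ico 0 1)) (n : ℕ) {a b : ℝ} (ha : 0 ≤ a)
    (hb : b ≤ 1) : IntegrableOn (fun s => s ^ n * ω s) (Ioc a b) :=
  (((integrableOn_Icc_iff_integrableOn_Ico (f := ω)).2 hωi).continuousOn_mul
    (continuous_pow n).continuousOn isCompact_Icc).mono_set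
    (Ioc_subset_Icc_self.trans (Icc_subset_Icc ha hb))

theorem tail_nonneg (hω : ∀ r, 0 ≤ ω r) (r : ℝ) : 0 ≤ tail ω r :=
  setIntegral_nonneg measurableSet_Ioc fun s _ => hω s

theorem tail_anti (hω : ∀ r, 0 ≤ ω r) (hωi : IntegrableOn ω (Ico 0 1)) {a b : ℝ} (ha : 0 ≤ a)
    (hab : a ≤ b) : tail ω b ≤ tail ω a :=
  setIntegral_mono_set (integrableOn_Ioc_of_Ico hωi ha le_rfl) (ae_of_all _ hω)
    (Ioc_subset_Ioc_left hab).eventuallyLE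

theorem setIntegral_pow_mul_le_tail (hω : ∀ r, 0 ≤ ω r) (hωi : IntegrableOn ω (Ico 0 1))
    (n : ℕ) {a : ℝ} (ha : 0 ≤ a) : ∫ s in Ioc a 1, s ^ n * ω s ≤ tail ω a :=
  setIntegral_mono_on (integrableOn_pow_mul hωi n ha le_rfl)
    (integrableOn_Ioc_of_Ico hωi ha le_rfl) measurableSet_Ioc fun s hs =>
    mul_le_of_le_one_left (hω s) (pow_le_one₀ (ha.trans hs.1.le) hs.2)

theorem pow_mul_tail_le_moment (hω : ∀ r, 0 ≤ ω r) (hωi : IntegrableOn ω (Ico 0 1))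
    (n : ℕ) {a : ℝ} (ha : 0 ≤ a) : a ^ n * tail ω a ≤ moment ω n := by
  calc a ^ n * tail ω a = ∫ s in Ioc a 1, a ^ n * ω s := (integral_const_mul _ _).symm
  _ ≤ ∫ s in Ioc a 1, s ^ n * ω s :=
    setIntegral_mono_on ((integrableOn_Ioc_of_Ico hωi ha le_rfl).const_mul _)
      (integrableOn_pow_mul hωi n ha le_rfl) measurableSet_Ioc fun s hs =>
      mul_le_mul_of_nonneg_right (pow_le_pow_left₀ ha hs.1.le n) (hω s)
  _ ≤ moment ω n :=
    setIntegral_mono_set (integrableOn_pow_mul hωi n le_rfl le_rfl)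
      ((ae_restrict_iff' measurableSet_Ioc).mpr (ae_of_all _ fun s hs =>
        mul_nonneg (pow_nonneg hs.1.le n) (hω s)))
      (Ioc_subset_Ioc_left ha).eventuallyLE

theorem moment_pos (hω : ∀ r, 0 ≤ ω r) (hωi : IntegrableOn ω (Ico 0 1))
    (hpos : ∀ r ∈ Ico (0 : ℝ) 1, 0 < tail ω r) (n : ℕ) : 0 < moment ω n :=
  (mul_pos (by positivity) (hpos 2⁻¹ ⟨by norm_num, by norm_num⟩)).trans_le
    (pow_mul_tail_le_moment hω hωi n (by norm_num))

theorem setIntegral_pow_mul_le (hω : ∀ r, 0 ≤ ω r) (hωi : IntegrableOn ω (Ico 0 1)) (n : ℕ)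
    {a b : ℝ} (ha : 0 ≤ a) (hab : a ≤ b) (hb : b ≤ 1) :
    ∫ s in Ioc a 1, s ^ n * ω s ≤ b ^ n * tail ω a + ∫ s in Ioc b 1, s ^ n * ω s := by
  rw [← Ioc_union_Ioc_eq_Ioc hab hb, setIntegral_union (Ioc_disjoint_Ioc_of_le le_rfl)
    measurableSet_Ioc (integrableOn_pow_mul hωi n ha hb)
    (integrableOn_pow_mul hωi n (ha.trans hab) le_rfl)]
  gcongr
  calc ∫ s in Ioc a b, s ^ n * ω s ≤ ∫ s in Ioc a b, b ^ n * ω s :=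
      setIntegral_mono_on (integrableOn_pow_mul hωi n ha hb)
        ((integrableOn_Ioc_of_Ico hωi ha hb).const_mul _) measurableSet_Ioc fun s hs =>
        mul_le_mul_of_nonneg_right (pow_le_pow_left₀ (ha.trans hs.1.le) hs.2 n) (hω s)
  _ ≤ ∫ s in Ioc a 1, b ^ n * ω s :=
      setIntegral_mono_set ((integrableOn_Ioc_of_Ico hωi ha le_rfl).const_mul _)
        (ae_of_all _ fun s => mul_nonneg (pow_nonneg (ha.trans hab) n) (hω s))
        (Ioc_subset_Ioc_right hb).eventuallyLE
  _ = b ^ n * tail ω a := integral_const_mul _ _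


theorem tail_dyadic_le {C : ℝ} (hC : 0 ≤ C)
    (hD : ∀ r ∈ Ico (0 : ℝ) 1, tail ω r ≤ C * tail ω ((1 + r) / 2)) (j i : ℕ) :
    tail ω (1 - 2⁻¹ ^ j) ≤ C ^ i * tail ω (1 - 2⁻¹ ^ (j + i)) := by
  induction i with
  | zero => simp
  | succ i ih =>
    have hmem : 1 - 2⁻¹ ^ (j + i) ∈ Ico (0 : ℝ) 1 :=
      ⟨sub_nonneg.2 (pow_le_one₀ (by norm_num) (by norm_num)), sub_lt_self _ (by positivity)⟩
    have hmid : (1 + (1 - 2⁻¹ ^ (j + i))) / 2 = 1 - (2 : ℝ)⁻¹ ^ (j + (i + 1)) := by ring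
    calc tail ω (1 - 2⁻¹ ^ j) ≤ C ^ i * tail ω (1 - 2⁻¹ ^ (j + i)) := ih
    _ ≤ C ^ i * (C * tail ω (1 - 2⁻¹ ^ (j + (i + 1)))) := by
      rw [← hmid]; exact mul_le_mul_of_nonneg_left (hD _ hmem) (by positivity)
    _ = C ^ (i + 1) * tail ω (1 - 2⁻¹ ^ (j + (i + 1))) := by ring

theorem pow_mul_tail_dyadic_le (hω : ∀ r, 0 ≤ ω r) {C L : ℝ} (hC : 0 ≤ C)
    (hD : ∀ r ∈ Ico (0 : ℝ) 1, tail ω r ≤ C * tail ω ((1 + r) / 2))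
    (hL : ∀ i : ℕ, C ^ (i + 1) * exp (-(2 ^ i / 2)) ≤ L * 2⁻¹ ^ i) {n j i : ℕ}
    (hn : 2 ^ (j + i) ≤ n) :
    (1 - 2⁻¹ ^ (j + 1)) ^ n * tail ω (1 - 2⁻¹ ^ j)
      ≤ L * 2⁻¹ ^ i * tail ω (1 - 2⁻¹ ^ (j + i + 1)) := by
  have hdecay : (1 - 2⁻¹ ^ (j + 1) : ℝ) ^ n ≤ exp (-(2 ^ i / 2)) := by
    refine (one_sub_pow_le_exp_neg (pow_le_one₀ (by norm_num) (by norm_num)) n).trans ?_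
    rw [exp_le_exp, neg_le_neg_iff]
    calc (2 ^ i / 2 : ℝ) = 2 ^ (j + i) * 2⁻¹ ^ (j + 1) := by
          rw [pow_add, inv_pow, pow_succ]; field_simp
    _ ≤ n * 2⁻¹ ^ (j + 1) := by gcongr; exact_mod_cast hn
  calc (1 - 2⁻¹ ^ (j + 1)) ^ n * tail ω (1 - 2⁻¹ ^ j)
      ≤ exp (-(2 ^ i / 2)) * (C ^ (i + 1) * tail ω (1 - 2⁻¹ ^ (j + i + 1))) :=
        mul_le_mul hdecay (tail_dyadic_le hC hD j (i + 1)) (tail_nonneg hω _) (exp_pos _).le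
  _ = C ^ (i + 1) * exp (-(2 ^ i / 2)) * tail ω (1 - 2⁻¹ ^ (j + i + 1)) := by ring
  _ ≤ L * 2⁻¹ ^ i * tail ω (1 - 2⁻¹ ^ (j + i + 1)) :=
        mul_le_mul_of_nonneg_right (hL i) (tail_nonneg hω _)

theorem setIntegral_pow_mul_dyadic_le (hω : ∀ r, 0 ≤ ω r) (hωi : IntegrableOn ω (Ico 0 1))
    {C L : ℝ} (hC : 0 ≤ C) (hD : ∀ r ∈ Ico (0 : ℝ) 1, tail ω r ≤ C * tail ω ((1 + r) / 2))
    (hL : ∀ i : ℕ, C ^ (i + 1) * exp (-(2 ^ i / 2)) ≤ L * 2⁻¹ ^ i) {n : ℕ} (i : ℕ) :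
    ∀ j, 2 ^ (j + i) ≤ 2 * n → ∫ s in Ioc (1 - 2⁻¹ ^ j) 1, s ^ n * ω s
      ≤ (2 * L + 1 - 2 * L * 2⁻¹ ^ i) * tail ω (1 - 2⁻¹ ^ (j + i)) := by
  have hτ0 : ∀ j : ℕ, (0 : ℝ) ≤ 1 - 2⁻¹ ^ j := fun j =>
    sub_nonneg.2 (pow_le_one₀ (by norm_num) (by norm_num))
  -- `2L + 1 - 2L 2^{-i} = 1 + Σ_{l < i} L 2^{-l}` sums the bounds of `pow_mul_tail_dyadic_le`
  induction i with
  | zero =>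
    intro j _
    simpa using setIntegral_pow_mul_le_tail hω hωi n (hτ0 j)
  | succ i ih =>
    intro j hj
    have hn : 2 ^ (j + i) ≤ n := by rw [← add_assoc, pow_succ] at hj; omega
    have hstep := setIntegral_pow_mul_le hω hωi n (hτ0 j)
      (sub_le_sub_left (pow_le_pow_of_le_one (by norm_num) (by norm_num) j.le_succ) 1)
      (sub_le_self _ (by positivity))
    have hrest := ih (j + 1) (by rwa [add_right_comm])
    rw [add_right_comm] at hrest
    calc ∫ s in Ioc (1 - 2⁻¹ ^ j) 1, s ^ n * ω s
        ≤ L * 2⁻¹ ^ i * tail ω (1 - 2⁻¹ ^ (j + i + 1))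
          + (2 * L + 1 - 2 * L * 2⁻¹ ^ i) * tail ω (1 - 2⁻¹ ^ (j + i + 1)) :=
          hstep.trans (add_le_add (pow_mul_tail_dyadic_le hω hC hD hL hn) hrest)
    _ = (2 * L + 1 - 2 * L * 2⁻¹ ^ (i + 1)) * tail ω (1 - 2⁻¹ ^ (j + i + 1)) := by ring


theorem exists_moment_le_mul_tail (hω : ∀ r, 0 ≤ ω r) (hωi : IntegrableOn ω (Ico 0 1))
    {C : ℝ} (hC : 0 ≤ C) (hD : ∀ r ∈ Ico (0 : ℝ) 1, tail ω r ≤ C * tail ω ((1 + r) / 2)) :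
    ∃ K > 0, ∀ r ∈ Ico (0 : ℝ) 1, ∀ n : ℕ, 1 ≤ n * (1 - r) → moment ω n ≤ K * tail ω r := by
  obtain ⟨L, hL0, hL⟩ := exists_pow_mul_exp_neg_le hC
  refine ⟨2 * L + 1, by linarith, fun r ⟨hr0, hr1⟩ n hn => ?_⟩
  have hδ : 0 < 1 - r := sub_pos.2 hr1
  obtain ⟨m, hm, hm'⟩ := exists_nat_pow_near (one_le_inv_iff₀.2 ⟨hδ, by linarith⟩) one_lt_two
  have hmn : 2 ^ (0 + (m + 1)) ≤ 2 * n := by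
    have : (2 : ℝ) ^ m ≤ n := hm.trans ((inv_le_iff_one_le_mul₀ hδ).2 (by linarith))
    rw [zero_add, pow_succ']
    exact_mod_cast Nat.mul_le_mul_left 2 (by exact_mod_cast this)
  have hrm : r ≤ 1 - 2⁻¹ ^ (0 + (m + 1)) := by
    rw [zero_add, inv_pow, le_sub_comm]
    exact (inv_le_comm₀ (by positivity) hδ).2 hm'.le
  have hmoment := setIntegral_pow_mul_dyadic_le hω hωi hC hD hL (m + 1) 0 hmn
  rw [pow_zero, sub_self] at hmoment
  calc moment ω n ≤ (2 * L + 1 - 2 * L * 2⁻¹ ^ (m + 1)) * tail ω (1 - 2⁻¹ ^ (0 + (m + 1))) :=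
        hmoment
  _ ≤ (2 * L + 1) * tail ω r := by
        gcongr
        · exact tail_nonneg hω _
        · exact sub_le_self _ (by positivity)
        · exact tail_anti hω hωi hr0 hrm


theorem summable_series (hω : ∀ r, 0 ≤ ω r) (hωi : IntegrableOn ω (Ico 0 1))
    (hpos : ∀ r ∈ Ico (0 : ℝ) 1, 0 < tail ω r) {r : ℝ} (hr : r ∈ Ico (0 : ℝ) 1) :
    Summable fun k : ℕ => r ^ (k + 1) / (((k : ℝ) + 2) * moment ω (k + 1)) := by
  obtain ⟨hr0, hr1⟩ := hr
  obtain ⟨ρ, hρ0, hρ1, hrρ⟩ : ∃ ρ, 0 < ρ ∧ ρ < 1 ∧ r < ρ :=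
    ⟨(1 + r) / 2, by linarith, by linarith, by linarith⟩
  have hρtail : 0 < tail ω ρ := hpos ρ ⟨hρ0.le, hρ1⟩
  have hratio : r / ρ < 1 := (div_lt_one hρ0).2 hrρ
  refine .of_nonneg_of_le (fun k => ?_) (fun k => ?_)
    ((summable_geometric_of_lt_one (by positivity) hratio).mul_left (tail ω ρ)⁻¹)
  · have := moment_pos hω hωi hpos (k + 1)
    positivity
  · calc r ^ (k + 1) / (((k : ℝ) + 2) * moment ω (k + 1))
        ≤ r ^ (k + 1) / (ρ ^ (k + 1) * tail ω ρ) := by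
          refine div_le_div_of_nonneg_left (by positivity) (by positivity) ?_
          calc ρ ^ (k + 1) * tail ω ρ ≤ moment ω (k + 1) :=
                pow_mul_tail_le_moment hω hωi (k + 1) hρ0.le
          _ ≤ ((k : ℝ) + 2) * moment ω (k + 1) :=
                le_mul_of_one_le_left (moment_pos hω hωi hpos _).le (by linarith [k.cast_nonneg (α := ℝ)])
    _ = (tail ω ρ)⁻¹ * (r / ρ) ^ (k + 1) := by rw [div_pow]; field_simp
    _ ≤ (tail ω ρ)⁻¹ * (r / ρ) ^ k :=
          mul_le_mul_of_nonneg_left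
            (pow_le_pow_of_le_one (by positivity) hratio.le k.le_succ) (by positivity)

theorem one_sub_mul_series_le (hω : ∀ r, 0 ≤ ω r) (hωi : IntegrableOn ω (Ico 0 1))
    (hpos : ∀ r ∈ Ico (0 : ℝ) 1, 0 < tail ω r) {M : ℝ}
    (hM : ∀ r ∈ Ico (0 : ℝ) 1, (1 - r) / tail ω r ≤ M) {r : ℝ} (hr : r ∈ Ico (0 : ℝ) 1) :
    (1 - r) * series ω r ≤ exp 2 * M := by
  have hterm : ∀ k : ℕ, r ^ (k + 1) / (((k : ℝ) + 2) * moment ω (k + 1)) ≤ exp 2 * M * r ^ k := by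
    intro k
    have hk : (0 : ℝ) < k + 2 := by positivity
    set a : ℝ := 1 - ((k : ℝ) + 2)⁻¹
    have hδ : 1 - a = ((k : ℝ) + 2)⁻¹ := by ring
    have hδ2 : ((k : ℝ) + 2)⁻¹ ≤ 2⁻¹ := inv_anti₀ two_pos (by linarith [k.cast_nonneg (α := ℝ)])
    have ha : a ∈ Ico (0 : ℝ) 1 := ⟨by linarith, by linarith [inv_pos.2 hk]⟩
    have hMa : 1 - a ≤ M * tail ω a := (div_le_iff₀ (hpos a ha)).1 (hM a ha)
    have hM0 : 0 ≤ M := nonneg_of_mul_nonneg_left (by linarith [inv_pos.2 hk]) (hpos a ha)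
    have hpow : exp (-2) ≤ a ^ (k + 1) := by
      refine le_trans ?_ (exp_neg_le_one_sub_pow (inv_pos.2 hk).le hδ2 (k + 1))
      rw [exp_le_exp, neg_le_neg_iff, mul_inv_le_iff₀ hk]
      push_cast
      linarith
    have hmom : exp (-2) ≤ M * (((k : ℝ) + 2) * moment ω (k + 1)) := by
      calc exp (-2) = exp (-2) * (((k : ℝ) + 2) * (1 - a)) := by rw [hδ, mul_inv_cancel₀ hk.ne', mul_one]
      _ ≤ a ^ (k + 1) * (((k : ℝ) + 2) * (M * tail ω a)) := 
          mul_le_mul hpow (by gcongr) (by rw [hδ]; positivity) (pow_nonneg ha.1 _)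
      _ = ((k : ℝ) + 2) * M * (a ^ (k + 1) * tail ω a) := by ring
      _ ≤ ((k : ℝ) + 2) * M * moment ω (k + 1) := by
          gcongr; exact pow_mul_tail_le_moment hω hωi (k + 1) ha.1
      _ = M * (((k : ℝ) + 2) * moment ω (k + 1)) := by ring
    have hone : 1 ≤ exp 2 * (M * (((k : ℝ) + 2) * moment ω (k + 1))) := by
      calc (1 : ℝ) = exp 2 * exp (-2) := by rw [← exp_add]; norm_num
      _ ≤ _ := mul_le_mul_of_nonneg_left hmom (exp_pos 2).le
    rw [div_le_iff₀ (mul_pos hk (moment_pos hω hωi hpos _))]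
    calc r ^ (k + 1) ≤ r ^ k := pow_le_pow_of_le_one hr.1 hr.2.le k.le_succ
    _ ≤ r ^ k * (exp 2 * (M * (((k : ℝ) + 2) * moment ω (k + 1)))) :=
          le_mul_of_one_le_right (pow_nonneg hr.1 k) hone
    _ = exp 2 * M * r ^ k * (((k : ℝ) + 2) * moment ω (k + 1)) := by ring
  have hgeom := summable_geometric_of_lt_one hr.1 hr.2
  calc (1 - r) * series ω r ≤ (1 - r) * ∑' k : ℕ, exp 2 * M * r ^ k :=
        mul_le_mul_of_nonneg_left
          ((summable_series hω hωi hpos hr).tsum_le_tsum hterm (hgeom.mul_left _))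
          (sub_nonneg.2 hr.2.le)
  _ = exp 2 * M := by
        rw [tsum_mul_left, tsum_geometric_of_lt_one hr.1 hr.2]
        field_simp [(sub_pos.2 hr.2).ne']


theorem exp_neg_six_div_le_series (hω : ∀ r, 0 ≤ ω r) (hωi : IntegrableOn ω (Ico 0 1))
    (hpos : ∀ r ∈ Ico (0 : ℝ) 1, 0 < tail ω r) {K : ℝ} (hK0 : 0 < K)
    (hK : ∀ r ∈ Ico (0 : ℝ) 1, ∀ n : ℕ, 1 ≤ n * (1 - r) → moment ω n ≤ K * tail ω r)
    {r : ℝ} (hr2 : 2⁻¹ ≤ r) (hr1 : r < 1) :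
    exp (-6) / (3 * K * tail ω r) ≤ series ω r := by
  have hr : r ∈ Ico (0 : ℝ) 1 := ⟨by linarith, hr1⟩
  have hδ : 0 < 1 - r := sub_pos.2 hr1
  have htail := hpos r hr
  set N := ⌈(1 - r)⁻¹⌉₊
  have hN1 : 1 ≤ N * (1 - r) := (inv_le_iff_one_le_mul₀ hδ).1 (Nat.le_ceil _)
  have hN2 : N * (1 - r) ≤ 3 / 2 := by
    have := (mul_lt_mul_of_pos_right (Nat.ceil_lt_add_one (inv_nonneg.2 hδ.le)) hδ)
    rw [add_mul, inv_mul_cancel₀ hδ.ne'] at this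
    linarith
  have hN0 : (0 : ℝ) < N := by nlinarith
  have hterm : ∀ k ∈ Finset.Ico N (2 * N),
      exp (-6) / (3 * K * tail ω r) / N ≤ r ^ (k + 1) / (((k : ℝ) + 2) * moment ω (k + 1)) := by
    intro k hk
    obtain ⟨hkN, hk2N⟩ := Finset.mem_Ico.1 hk
    have hkN' : (N : ℝ) ≤ k := by exact_mod_cast hkN
    have hk2N' : (k : ℝ) + 1 ≤ 2 * N := by exact_mod_cast hk2N
    have hmom : moment ω (k + 1) ≤ K * tail ω r :=
      hK r hr (k + 1) (by push_cast; nlinarith)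
    have hpow : exp (-6) ≤ r ^ (k + 1) :=
      calc exp (-6) ≤ exp (-(2 * (k + 1 : ℕ) * (1 - r))) := by
            rw [exp_le_exp]; push_cast; nlinarith [mul_le_mul_of_nonneg_right hk2N' hδ.le]
      _ ≤ (1 - (1 - r)) ^ (k + 1) := exp_neg_le_one_sub_pow hδ.le (by linarith) (k + 1)
      _ = r ^ (k + 1) := by ring
    have hmom0 := moment_pos hω hωi hpos (k + 1)
    calc exp (-6) / (3 * K * tail ω r) / N = exp (-6) / (3 * N * (K * tail ω r)) := by
          field_simp
    _ ≤ r ^ (k + 1) / (((k : ℝ) + 2) * moment ω (k + 1)) :=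
          div_le_div₀ (by positivity) hpow (by positivity)
            (mul_le_mul (by linarith) hmom hmom0.le (by positivity))
  calc exp (-6) / (3 * K * tail ω r)
      = ∑ _k ∈ Finset.Ico N (2 * N), exp (-6) / (3 * K * tail ω r) / N := by
        rw [Finset.sum_const, Nat.card_Ico, two_mul, Nat.add_sub_cancel, nsmul_eq_mul]
        field_simp
  _ ≤ ∑ k ∈ Finset.Ico N (2 * N), r ^ (k + 1) / (((k : ℝ) + 2) * moment ω (k + 1)) :=
        Finset.sum_le_sum hterm
  _ ≤ series ω r := (summable_series hω hωi hpos hr).sum_le_tsum _ fun k _ => by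
        have := moment_pos hω hωi hpos (k + 1)
        positivity

theorem exists_tail_bound_of_series_bound (hω : ∀ r, 0 ≤ ω r) (hωi : IntegrableOn ω (Ico 0 1))
    (hpos : ∀ r ∈ Ico (0 : ℝ) 1, 0 < tail ω r) {C : ℝ} (hC : 0 ≤ C)
    (hD : ∀ r ∈ Ico (0 : ℝ) 1, tail ω r ≤ C * tail ω ((1 + r) / 2)) {M : ℝ}
    (hM : ∀ r ∈ Ico (0 : ℝ) 1, (1 - r) * series ω r ≤ M) :
    ∃ M', ∀ r ∈ Ico (0 : ℝ) 1, (1 - r) / tail ω r ≤ M' := by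
  obtain ⟨K, hK0, hK⟩ := exists_moment_le_mul_tail hω hωi hC hD
  refine ⟨max (tail ω 2⁻¹)⁻¹ (3 * K * exp 6 * M), fun r hr => ?_⟩
  have htail := hpos r hr
  rcases lt_or_ge r 2⁻¹ with hr2 | hr2
  · refine le_max_of_le_left ?_
    calc (1 - r) / tail ω r ≤ 1 / tail ω r := by gcongr; linarith [hr.1]
    _ ≤ (tail ω 2⁻¹)⁻¹ := by
          rw [one_div]
          exact inv_anti₀ (hpos _ ⟨by norm_num, by norm_num⟩) (tail_anti hω hωi hr.1 hr2.le)
  · refine le_max_of_le_right ?_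
    calc (1 - r) / tail ω r
        = 3 * K * exp 6 * ((1 - r) * (exp (-6) / (3 * K * tail ω r))) := by
          rw [exp_neg]; field_simp
    _ ≤ 3 * K * exp 6 * ((1 - r) * series ω r) := by
          gcongr
          · linarith [hr.2]
          · exact exp_neg_six_div_le_series hω hωi hpos hK0 hK hr2 hr.2
    _ ≤ 3 * K * exp 6 * M := by gcongr; exact hM r hr

end RadialWeight

open RadialWeight in
/-- For ω ∈ D̂: sup_{0≤r<1} (1-r)/ω̂(r) < ∞ iff
sup_{0≤r<1} (1-r) Σ_{k≥1} r^k/((k+1) ω_k) < ∞. -/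
theorem stmt_16 (ω : ℝ → ℝ) (hnn : ∀ r, 0 ≤ ω r)
    (hInt : IntegrableOn ω (Set.Ico (0:ℝ) 1))
    (What : ℝ → ℝ) (hWhat : ∀ r, What r = ∫ s in Set.Ioc r 1, ω s)
    (hpos : ∀ r ∈ Set.Ico (0:ℝ) 1, 0 < What r)
    (hD : ∃ C ≥ (1:ℝ), ∀ r ∈ Set.Ico (0:ℝ) 1, What r ≤ C * What ((1 + r) / 2))
    (mom : ℝ → ℝ) (hmom : ∀ x, mom x = ∫ s in Set.Ioc (0:ℝ) 1, s ^ x * ω s) :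
    (∃ M : ℝ, ∀ r ∈ Set.Ico (0:ℝ) 1, (1 - r) / What r ≤ M) ↔
    (∃ M : ℝ, ∀ r ∈ Set.Ico (0:ℝ) 1,
      (1 - r) * (∑' k : ℕ, r ^ (k + 1) / (((k : ℝ) + 2) * mom ((k : ℝ) + 1))) ≤ M) := by
  obtain rfl : What = tail ω := funext hWhat
  obtain ⟨C, hC, hD⟩ := hD
  have hseries (r : ℝ) :
      ∑' k : ℕ, r ^ (k + 1) / (((k : ℝ) + 2) * mom ((k : ℝ) + 1)) = series ω r := by
    refine tsum_congr fun k => ?_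
    rw [hmom, moment, ← Nat.cast_succ]
    simp only [rpow_natCast]
  simp only [hseries]
  constructor
  · rintro ⟨M, hM⟩
    exact ⟨exp 2 * M, fun r hr => one_sub_mul_series_le hnn hInt hpos hM hr⟩
  · rintro ⟨M, hM⟩
    exact exists_tail_bound_of_series_bound hnn hInt hpos (by linarith) hD hM
end

section
/- Let ω be a radial weight in D̂. Then ω ω̂ ∈ D̂ and the moments satisfy (ω_x)² ≍ (ωω̂)_x for all x ≥ 1, where (ωω̂)_x = ∫_0^1 s^x ω(s) ω̂(s) ds. -/
/-!
Fubini on the triangle `s < u` gives `∫_r^1 f(s) ∫_s^1 f(u) du ds = (∫_r^1 f)² / 2`. For `f = ω`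
this says that the tail of `ωω̂` is `ω̂² / 2`, so `ωω̂ ∈ D̂` with constant `C²`. For
`f(s) = s^x ω(s)` it gives `ω_x² ≤ 2 (ωω̂)_x`, because `∫_s^1 u^x ω(u) du ≤ ω̂(s)`.

Conversely `s^{x/2} ω̂(s) ≤ ω_{x/2}` gives `(ωω̂)_x ≤ ω_{x/2}²`, and `ω_{x/2} ≲ ω_x` on `D̂`:
writing `ω_y = y ∫_0^1 t^{y-1} ω̂(t) dt` (Fubini again), the doubling `ω̂(t) ≤ C ω̂((1+t)/2)`,
the substitution `s = (1+t)/2` and `(2s-1)^{y-1} ≤ 2 s^{2y-1}` give `ω_y ≤ 2C ω_{2y}` for `y ≥ 1`.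
-/

open MeasureTheory Set

section IocIntegrals

variable {f g : ℝ → ℝ} {a b : ℝ}

theorem integral_mul_integral_Ioc_swap (hf : IntegrableOn f (Ioc a b))
    (hg : IntegrableOn g (Ioc a b)) :
    ∫ s in Ioc a b, f s * ∫ u in Ioc s b, g u =
      ∫ u in Ioc a b, (∫ s in Ioc a u, f s) * g u := by
  set μ := volume.restrict (Ioc a b)
  set Φ : ℝ → ℝ → ℝ := fun s u => if s < u then f s * g u else 0 with hΦ
  have hΦ_int : Integrable (Function.uncurry Φ) (μ.prod μ) := by
    have : Function.uncurry Φ = {p : ℝ × ℝ | p.1 < p.2}.indicator fun p => f p.1 * g p.2 := by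
      ext p
      simp only [Function.uncurry, hΦ, indicator_apply, mem_ofPred_eq]
    rw [this]
    exact (hf.mul_prod hg).indicator (measurableSet_lt measurable_fst measurable_snd)
  have inner_u : ∀ s ∈ Ioc a b, ∫ u, Φ s u ∂μ = f s * ∫ u in Ioc s b, g u := by
    intro s hs
    have : ∀ u, Φ s u = (Ioi s).indicator (fun u => f s * g u) u := fun u => by
      simp only [hΦ, indicator_apply, mem_Ioi]
    simp only [μ, this, integral_indicator measurableSet_Ioi,
      Measure.restrict_restrict measurableSet_Ioi, inter_comm (Ioi s), Ioc_inter_Ioi,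
      max_eq_right hs.1.le, integral_const_mul]
  have inner_s : ∀ u ∈ Ioc a b, ∫ s, Φ s u ∂μ = (∫ s in Ioc a u, f s) * g u := by
    intro u hu
    have : ∀ s, Φ s u = (Iio u).indicator (fun s => f s * g u) s := fun s => by
      simp only [hΦ, indicator_apply, mem_Iio]
    have hset : Iio u ∩ Ioc a b = Ioo a u := by
      ext s; simp only [mem_inter_iff, mem_Iio, mem_Ioc, mem_Ioo]
      constructor
      · rintro ⟨hsu, has, -⟩; exact ⟨has, hsu⟩
      · rintro ⟨has, hsu⟩; exact ⟨hsu, has, hsu.le.trans hu.2⟩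
    simp only [μ, this, integral_indicator measurableSet_Iio, Measure.restrict_restrict
      measurableSet_Iio, hset, integral_mul_const, integral_Ioc_eq_integral_Ioo]
  calc ∫ s in Ioc a b, f s * ∫ u in Ioc s b, g u = ∫ s, ∫ u, Φ s u ∂μ ∂μ :=
        (setIntegral_congr_fun measurableSet_Ioc inner_u).symm
    _ = ∫ u, ∫ s, Φ s u ∂μ ∂μ := integral_integral_swap hΦ_int
    _ = ∫ u in Ioc a b, (∫ s in Ioc a u, f s) * g u :=
        setIntegral_congr_fun measurableSet_Ioc inner_s

theorem continuousOn_integral_Ioc_left (hf : IntegrableOn f (Icc a b)) :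
    ContinuousOn (fun s => ∫ u in Ioc s b, f u) (Icc a b) := by
  rcases le_or_gt a b with hab | hab
  · rw [← uIcc_of_le hab] at hf ⊢
    refine (intervalIntegral.continuousOn_primitive_interval_left hf).congr fun s hs => ?_
    rw [uIcc_of_le hab] at hs
    exact (intervalIntegral.integral_of_le hs.2).symm
  · simp [Icc_eq_empty_of_lt hab]

theorem MeasureTheory.IntegrableOn.mul_integral_Ioc_left (hf : IntegrableOn f (Icc a b))
    (hg : IntegrableOn g (Icc a b)) :
    IntegrableOn (fun s => f s * ∫ u in Ioc s b, g u) (Icc a b) :=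
  hf.mul_continuousOn (continuousOn_integral_Ioc_left hg) isCompact_Icc

theorem integral_mul_integral_Ioc_self (hf : IntegrableOn f (Icc a b)) :
    ∫ s in Ioc a b, f s * ∫ u in Ioc s b, f u = (∫ s in Ioc a b, f s) ^ 2 / 2 := by
  set T := ∫ s in Ioc a b, f s
  set I := ∫ s in Ioc a b, f s * ∫ u in Ioc s b, f u
  have hf' : IntegrableOn f (Ioc a b) := hf.mono_set Ioc_subset_Icc_self
  have hsplit : ∀ u ∈ Ioc a b, ∫ s in Ioc a u, f s = T - ∫ s in Ioc u b, f s := by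
    intro u hu
    rw [eq_sub_iff_add_eq, ← setIntegral_union (Ioc_disjoint_Ioc_of_le le_rfl) measurableSet_Ioc
      (hf'.mono_set (Ioc_subset_Ioc_right hu.2)) (hf'.mono_set (Ioc_subset_Ioc_left hu.1.le)),
      Ioc_union_Ioc_eq_Ioc hu.1.le hu.2]
  have hI : IntegrableOn (fun s => f s * ∫ u in Ioc s b, f u) (Ioc a b) :=
    (hf.mul_integral_Ioc_left hf).mono_set Ioc_subset_Icc_self
  have : I = T * T - I :=
    calc I = ∫ u in Ioc a b, (∫ s in Ioc a u, f s) * f u := integral_mul_integral_Ioc_swap hf' hf'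
      _ = ∫ u in Ioc a b, (T * f u - f u * ∫ s in Ioc u b, f s) :=
          setIntegral_congr_fun measurableSet_Ioc fun u hu => by
            simp only [hsplit u hu]; ring
      _ = T * T - I := by rw [integral_sub (hf'.const_mul T) hI, integral_const_mul]
  linarith

end IocIntegrals

theorem two_mul_sub_one_rpow_le {s y : ℝ} (hs : 1 / 2 ≤ s) (hy : 1 ≤ y) :
    (2 * s - 1) ^ (y - 1) ≤ 2 * s ^ (2 * y - 1) := by
  have hs0 : 0 < s := by linarith
  calc (2 * s - 1) ^ (y - 1) ≤ (s ^ (2 : ℝ)) ^ (y - 1) := by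
        refine Real.rpow_le_rpow (by linarith) ?_ (by linarith)
        rw [Real.rpow_two]; nlinarith [sq_nonneg (s - 1)]
    _ = s ^ (2 * y - 1) / s := by
        rw [← Real.rpow_mul hs0.le, ← Real.rpow_sub_one hs0.ne']; ring_nf
    _ ≤ 2 * s ^ (2 * y - 1) := by
        rw [div_le_iff₀ hs0]
        nlinarith [Real.rpow_nonneg hs0.le (2 * y - 1)]

/-- The tail `ω̂(r)`. -/
noncomputable def weightTail (ω : ℝ → ℝ) (r : ℝ) : ℝ := ∫ s in Ioc r 1, ω s

/-- The moment `ω_x`. -/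
noncomputable def weightMoment (ω : ℝ → ℝ) (x : ℝ) : ℝ := ∫ s in Ioc 0 1, s ^ x * ω s

section RadialWeight

variable {ω : ℝ → ℝ}

theorem continuousOn_weightTail (hω : IntegrableOn ω (Icc 0 1)) :
    ContinuousOn (weightTail ω) (Icc 0 1) :=
  continuousOn_integral_Ioc_left hω

theorem weightMoment_eq_integral_weightTail (hω : IntegrableOn ω (Icc 0 1))
    {y : ℝ} (hy : 0 < y) :
    weightMoment ω y = ∫ t in (0)..1, y * t ^ (y - 1) * weightTail ω t := by
  have hpow : IntegrableOn (fun t : ℝ => y * t ^ (y - 1)) (Ioc 0 1) :=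
    (intervalIntegral.intervalIntegrable_rpow' (by linarith : -1 < y - 1)).1.const_mul y
  unfold weightMoment weightTail
  rw [intervalIntegral.integral_of_le zero_le_one,
    integral_mul_integral_Ioc_swap hpow (hω.mono_set Ioc_subset_Icc_self)]
  refine setIntegral_congr_fun measurableSet_Ioc fun u hu => ?_
  rw [← intervalIntegral.integral_of_le hu.1.le, intervalIntegral.integral_const_mul,
    integral_rpow (Or.inl (by linarith)), sub_add_cancel, Real.zero_rpow hy.ne', sub_zero,
    mul_div_cancel₀ _ hy.ne']

theorem weightTail_nonneg (hnn : ∀ s, 0 ≤ ω s) (r : ℝ) : 0 ≤ weightTail ω r :=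
  setIntegral_nonneg measurableSet_Ioc fun s _ => hnn s

theorem weightMoment_nonneg (hnn : ∀ s, 0 ≤ ω s) (x : ℝ) : 0 ≤ weightMoment ω x :=
  setIntegral_nonneg measurableSet_Ioc fun s hs =>
    mul_nonneg (Real.rpow_nonneg hs.1.le x) (hnn s)

theorem integrableOn_rpow_mul (hω : IntegrableOn ω (Icc 0 1)) {x : ℝ} (hx : 0 ≤ x) :
    IntegrableOn (fun s => s ^ x * ω s) (Icc 0 1) :=
  hω.continuousOn_mul (Real.continuous_rpow_const hx).continuousOn isCompact_Icc

theorem integrableOn_rpow_mul_mul_weightTail (hω : IntegrableOn ω (Icc 0 1)) {x : ℝ}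
    (hx : 0 ≤ x) : IntegrableOn (fun s => s ^ x * (ω s * weightTail ω s)) (Ioc 0 1) :=
  (((integrableOn_rpow_mul hω hx).mul_continuousOn (continuousOn_weightTail hω)
    isCompact_Icc).mono_set Ioc_subset_Icc_self).congr_fun
    (fun _ _ => mul_assoc _ _ _) measurableSet_Ioc

theorem integral_rpow_mul_le_weightTail (hω : IntegrableOn ω (Icc 0 1)) (hnn : ∀ s, 0 ≤ ω s)
    {a x : ℝ} (ha : 0 ≤ a) (hx : 0 ≤ x) :
    ∫ u in Ioc a 1, u ^ x * ω u ≤ weightTail ω a := by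
  have hsub : Ioc a 1 ⊆ Icc 0 1 := fun u hu => ⟨ha.trans hu.1.le, hu.2⟩
  refine setIntegral_mono_on ((integrableOn_rpow_mul hω hx).mono_set hsub) (hω.mono_set hsub)
    measurableSet_Ioc fun u hu => ?_
  exact mul_le_of_le_one_left (hnn u) (Real.rpow_le_one (ha.trans hu.1.le) hu.2 hx)

theorem rpow_mul_weightTail_le_weightMoment (hω : IntegrableOn ω (Icc 0 1))
    (hnn : ∀ s, 0 ≤ ω s) {a x : ℝ} (ha : 0 ≤ a) (hx : 0 ≤ x) :
    a ^ x * weightTail ω a ≤ weightMoment ω x := by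
  have hsub : Ioc a 1 ⊆ Ioc 0 1 := Ioc_subset_Ioc_left ha
  have hint : IntegrableOn (fun s => s ^ x * ω s) (Ioc 0 1) :=
    (integrableOn_rpow_mul hω hx).mono_set Ioc_subset_Icc_self
  calc a ^ x * weightTail ω a = ∫ u in Ioc a 1, a ^ x * ω u := (integral_const_mul _ _).symm
    _ ≤ ∫ u in Ioc a 1, u ^ x * ω u :=
        setIntegral_mono_on ((hω.mono_set (hsub.trans Ioc_subset_Icc_self)).const_mul _)
          (hint.mono_set hsub) measurableSet_Ioc fun u hu =>
          mul_le_mul_of_nonneg_right (Real.rpow_le_rpow ha hu.1.le hx) (hnn u)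
    _ ≤ weightMoment ω x :=
        setIntegral_mono_set hint ((ae_restrict_iff' measurableSet_Ioc).2 <|
          Filter.Eventually.of_forall fun u hu => mul_nonneg (Real.rpow_nonneg hu.1.le x) (hnn u))
          hsub.eventuallyLE

theorem weightTail_mul_weightTail (hω : IntegrableOn ω (Icc 0 1)) {r : ℝ} (hr : 0 ≤ r) :
    weightTail (fun s => ω s * weightTail ω s) r = weightTail ω r ^ 2 / 2 :=
  integral_mul_integral_Ioc_self (hω.mono_set (Icc_subset_Icc_left hr))

theorem weightTail_mul_weightTail_le (hω : IntegrableOn ω (Icc 0 1)) (hnn : ∀ s, 0 ≤ ω s)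
    {C : ℝ} (hD : ∀ r ∈ Ico (0 : ℝ) 1, weightTail ω r ≤ C * weightTail ω ((1 + r) / 2))
    {r : ℝ} (hr : r ∈ Ico (0 : ℝ) 1) :
    weightTail (fun s => ω s * weightTail ω s) r ≤
      C ^ 2 * weightTail (fun s => ω s * weightTail ω s) ((1 + r) / 2) := by
  rw [weightTail_mul_weightTail hω hr.1, weightTail_mul_weightTail hω (by linarith [hr.1])]
  have := pow_le_pow_left₀ (weightTail_nonneg hnn r) (hD r hr) 2
  rw [mul_pow] at this
  linarith


theorem weightMoment_le_weightMoment_two_mul (hω : IntegrableOn ω (Icc 0 1))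
    (hnn : ∀ s, 0 ≤ ω s) {C : ℝ} (hC : 0 ≤ C)
    (hD : ∀ r ∈ Ico (0 : ℝ) 1, weightTail ω r ≤ C * weightTail ω ((1 + r) / 2))
    {y : ℝ} (hy : 1 ≤ y) :
    weightMoment ω y ≤ 2 * C * weightMoment ω (2 * y) := by
  set W := weightTail ω
  have hW : ContinuousOn W (Icc 0 1) := continuousOn_weightTail hω
  have hD' : ∀ t ∈ Icc (0 : ℝ) 1, W t ≤ C * W (t / 2 + 1 / 2) := by
    intro t ht
    rcases ht.2.lt_or_eq with h | rfl
    · convert hD t ⟨ht.1, h⟩ using 3; ring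
    · norm_num [W, weightTail]
  have hpow : ∀ p : ℝ, 0 ≤ p → ∀ c : ℝ, ContinuousOn (fun t => c * t ^ p * W t) (Icc 0 1) :=
    fun p hp c => (continuous_const.mul (Real.continuous_rpow_const hp)).continuousOn.mul hW
  have hshift : ∀ c : ℝ, Continuous fun s : ℝ => c * (2 * s - 1) ^ (y - 1) :=
    fun c => continuous_const.mul ((Real.continuous_rpow_const (by linarith)).comp (by fun_prop))
  have hF₁ : ContinuousOn (fun t => y * t ^ (y - 1) * W t) (Icc 0 1) := hpow _ (by linarith) _
  have hF₂ : ContinuousOn (fun t : ℝ =>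
      C * (y * (2 * (t / 2 + 1 / 2) - 1) ^ (y - 1) * W (t / 2 + 1 / 2))) (Icc 0 1) :=
    continuousOn_const.mul <| ((hshift y).comp (by fun_prop)).continuousOn.mul <|
      hW.comp (by fun_prop) fun t ht => ⟨by linarith [ht.1], by linarith [ht.2]⟩
  have hF₃ : ContinuousOn (fun s => y * (2 * s - 1) ^ (y - 1) * W s) (Icc (1 / 2) 1) :=
    (hshift y).continuousOn.mul (hW.mono (Icc_subset_Icc_left (by norm_num)))
  have hF₄ : ContinuousOn (fun s => 2 * y * s ^ (2 * y - 1) * W s) (Icc 0 1) :=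
    hpow _ (by linarith) _
  calc weightMoment ω y = ∫ t in (0)..1, y * t ^ (y - 1) * W t :=
        weightMoment_eq_integral_weightTail hω (by linarith)
    _ ≤ ∫ t in (0)..1, C * (y * (2 * (t / 2 + 1 / 2) - 1) ^ (y - 1) * W (t / 2 + 1 / 2)) := by
        refine intervalIntegral.integral_mono_on zero_le_one
          (hF₁.intervalIntegrable_of_Icc zero_le_one) (hF₂.intervalIntegrable_of_Icc zero_le_one)
          fun t ht => ?_
        rw [show 2 * (t / 2 + 1 / 2) - 1 = t by ring]
        calc y * t ^ (y - 1) * W t ≤ y * t ^ (y - 1) * (C * W (t / 2 + 1 / 2)) :=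
              mul_le_mul_of_nonneg_left (hD' t ht)
                (mul_nonneg (by linarith) (Real.rpow_nonneg ht.1 _))
          _ = C * (y * t ^ (y - 1) * W (t / 2 + 1 / 2)) := by ring
    _ = C * (2 * ∫ s in (1 / 2)..1, y * (2 * s - 1) ^ (y - 1) * W s) := by
        rw [intervalIntegral.integral_const_mul,
          intervalIntegral.integral_comp_div_add (fun s => y * (2 * s - 1) ^ (y - 1) * W s)
            two_ne_zero]
        norm_num
    _ ≤ C * (2 * ∫ s in (1 / 2)..1, 2 * y * s ^ (2 * y - 1) * W s) := by
        gcongr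
        refine intervalIntegral.integral_mono_on (by norm_num)
          (hF₃.intervalIntegrable_of_Icc (by norm_num))
          ((hF₄.mono (Icc_subset_Icc_left (by norm_num))).intervalIntegrable_of_Icc
            (by norm_num)) fun s hs => ?_
        have := two_mul_sub_one_rpow_le hs.1 hy
        have hWs := weightTail_nonneg hnn s
        calc y * (2 * s - 1) ^ (y - 1) * W s ≤ y * (2 * s ^ (2 * y - 1)) * W s := by gcongr
          _ = 2 * y * s ^ (2 * y - 1) * W s := by ring
    _ ≤ C * (2 * ∫ s in (0)..1, 2 * y * s ^ (2 * y - 1) * W s) := by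
        gcongr
        refine intervalIntegral.integral_mono_interval (by norm_num) (by norm_num) le_rfl ?_
          (hF₄.intervalIntegrable_of_Icc zero_le_one)
        refine (ae_restrict_iff' measurableSet_Ioc).2 (Filter.Eventually.of_forall fun s hs => ?_)
        exact mul_nonneg (mul_nonneg (by linarith) (Real.rpow_nonneg hs.1.le _))
          (weightTail_nonneg hnn s)
    _ = 2 * C * weightMoment ω (2 * y) := by
        rw [weightMoment_eq_integral_weightTail hω (by linarith)]
        ring

theorem weightMoment_half_le (hω : IntegrableOn ω (Icc 0 1)) (hnn : ∀ s, 0 ≤ ω s) {C : ℝ}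
    (hC : 0 ≤ C)
    (hD : ∀ r ∈ Ico (0 : ℝ) 1, weightTail ω r ≤ C * weightTail ω ((1 + r) / 2))
    {x : ℝ} (hx : 1 ≤ x) :
    weightMoment ω (x / 2) ≤ 4 * C * weightMoment ω x := by
  have hm := weightMoment_nonneg hnn x
  rcases le_total 2 x with h2 | h2
  · have := weightMoment_le_weightMoment_two_mul hω hnn hC hD (y := x / 2) (by linarith)
    rw [mul_div_cancel₀ x two_ne_zero] at this
    nlinarith
  · have hquarter : (1 : ℝ) / 4 ≤ (1 / 2) ^ x :=
      calc (1 : ℝ) / 4 = (1 / 2) ^ (2 : ℝ) := by norm_num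
        _ ≤ (1 / 2) ^ x := Real.rpow_le_rpow_of_exponent_ge (by norm_num) (by norm_num) h2
    have hW := weightTail_nonneg hnn (1 / 2)
    calc weightMoment ω (x / 2) ≤ weightTail ω 0 :=
          integral_rpow_mul_le_weightTail hω hnn le_rfl (by linarith)
      _ ≤ C * weightTail ω (1 / 2) := by simpa using hD 0 ⟨le_rfl, one_pos⟩
      _ ≤ C * (4 * ((1 / 2) ^ x * weightTail ω (1 / 2))) := by gcongr; nlinarith
      _ ≤ 4 * C * weightMoment ω x := by
          have := rpow_mul_weightTail_le_weightMoment hω hnn (a := 1 / 2) (by norm_num)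
            (by linarith : 0 ≤ x)
          nlinarith

theorem weightMoment_mul_weightTail_le (hω : IntegrableOn ω (Icc 0 1)) (hnn : ∀ s, 0 ≤ ω s)
    {x : ℝ} (hx : 0 ≤ x) :
    weightMoment (fun s => ω s * weightTail ω s) x ≤ weightMoment ω (x / 2) ^ 2 := by
  have hx2 : 0 ≤ x / 2 := by linarith
  calc weightMoment (fun s => ω s * weightTail ω s) x
      ≤ ∫ s in Ioc 0 1, s ^ (x / 2) * ω s * weightMoment ω (x / 2) := by
        refine setIntegral_mono_on (integrableOn_rpow_mul_mul_weightTail hω hx)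
          (((integrableOn_rpow_mul hω hx2).mono_set Ioc_subset_Icc_self).mul_const _)
          measurableSet_Ioc fun s hs => ?_
        calc s ^ x * (ω s * weightTail ω s)
            = s ^ (x / 2) * ω s * (s ^ (x / 2) * weightTail ω s) := by
              rw [← add_halves x, Real.rpow_add hs.1, add_halves]; ring
          _ ≤ s ^ (x / 2) * ω s * weightMoment ω (x / 2) :=
              mul_le_mul_of_nonneg_left
                (rpow_mul_weightTail_le_weightMoment hω hnn hs.1.le hx2)
                (mul_nonneg (Real.rpow_nonneg hs.1.le _) (hnn s))
    _ = weightMoment ω (x / 2) ^ 2 := by rw [integral_mul_const, sq]; rfl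

theorem sq_weightMoment_le (hω : IntegrableOn ω (Icc 0 1)) (hnn : ∀ s, 0 ≤ ω s)
    {x : ℝ} (hx : 0 ≤ x) :
    weightMoment ω x ^ 2 ≤ 2 * weightMoment (fun s => ω s * weightTail ω s) x := by
  have hf := integrableOn_rpow_mul hω hx
  have hsq := integral_mul_integral_Ioc_self hf
  have : ∫ s in Ioc 0 1, s ^ x * ω s * ∫ u in Ioc s 1, u ^ x * ω u ≤
      weightMoment (fun s => ω s * weightTail ω s) x := by
    refine setIntegral_mono_on ((hf.mul_integral_Ioc_left hf).mono_set Ioc_subset_Icc_self)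
      (integrableOn_rpow_mul_mul_weightTail hω hx) measurableSet_Ioc fun s hs => ?_
    calc s ^ x * ω s * ∫ u in Ioc s 1, u ^ x * ω u ≤ s ^ x * ω s * weightTail ω s :=
          mul_le_mul_of_nonneg_left (integral_rpow_mul_le_weightTail hω hnn hs.1.le hx)
            (mul_nonneg (Real.rpow_nonneg hs.1.le _) (hnn s))
      _ = s ^ x * (ω s * weightTail ω s) := mul_assoc _ _ _
  rw [weightMoment]
  linarith

end RadialWeight

theorem stmt_17_general (ω : ℝ → ℝ) (hnn : ∀ r, 0 ≤ ω r)
    (hInt : IntegrableOn ω (Set.Ico (0:ℝ) 1))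
    (What : ℝ → ℝ) (hWhat : ∀ r, What r = ∫ s in Set.Ioc r 1, ω s)
    (hD : ∃ C ≥ (1:ℝ), ∀ r ∈ Set.Ico (0:ℝ) 1, What r ≤ C * What ((1 + r) / 2))
    (mom : ℝ → ℝ) (hmom : ∀ x, mom x = ∫ s in Set.Ioc (0:ℝ) 1, s ^ x * ω s)
    (momWW : ℝ → ℝ)
    (hmomWW : ∀ x, momWW x = ∫ s in Set.Ioc (0:ℝ) 1, s ^ x * (ω s * What s)) :
    (∃ C ≥ (1:ℝ), ∀ r ∈ Set.Ico (0:ℝ) 1,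
      (∫ s in Set.Ioc r 1, ω s * What s) ≤
        C * ∫ s in Set.Ioc ((1 + r) / 2) 1, ω s * What s) ∧
    (∃ c > (0:ℝ), ∃ C > (0:ℝ), ∀ x ≥ (1:ℝ),
      c * (mom x) ^ 2 ≤ momWW x ∧ momWW x ≤ C * (mom x) ^ 2) := by
  obtain rfl : What = weightTail ω := funext hWhat
  obtain rfl : mom = weightMoment ω := funext hmom
  obtain rfl : momWW = weightMoment (fun s => ω s * weightTail ω s) := funext hmomWW
  obtain ⟨C, hC, hD⟩ := hD
  have hω : IntegrableOn ω (Icc 0 1) := (integrableOn_Icc_iff_integrableOn_Ico).2 hInt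
  have hC0 : 0 ≤ C := by linarith
  refine ⟨⟨C ^ 2, one_le_pow₀ hC, fun r hr => weightTail_mul_weightTail_le hω hnn hD hr⟩,
    1 / 2, by norm_num, (4 * C) ^ 2, by positivity, fun x hx => ⟨?_, ?_⟩⟩
  · linarith [sq_weightMoment_le hω hnn (x := x) (by linarith)]
  · calc weightMoment (fun s => ω s * weightTail ω s) x ≤ weightMoment ω (x / 2) ^ 2 :=
          weightMoment_mul_weightTail_le hω hnn (by linarith)
      _ ≤ (4 * C * weightMoment ω x) ^ 2 :=
          pow_le_pow_left₀ (weightMoment_nonneg hnn _) (weightMoment_half_le hω hnn hC0 hD hx) 2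
      _ = (4 * C) ^ 2 * weightMoment ω x ^ 2 := by ring

/-- For ω ∈ D̂: the weight ωω̂ is also in D̂, and (ω_x)² ≍ (ωω̂)_x for x ≥ 1. -/
theorem stmt_17 (ω : ℝ → ℝ) (hnn : ∀ r, 0 ≤ ω r)
    (hInt : IntegrableOn ω (Set.Ico (0:ℝ) 1))
    (What : ℝ → ℝ) (hWhat : ∀ r, What r = ∫ s in Set.Ioc r 1, ω s)
    (hpos : ∀ r ∈ Set.Ico (0:ℝ) 1, 0 < What r)
    (hD : ∃ C ≥ (1:ℝ), ∀ r ∈ Set.Ico (0:ℝ) 1, What r ≤ C * What ((1 + r) / 2))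
    (mom : ℝ → ℝ) (hmom : ∀ x, mom x = ∫ s in Set.Ioc (0:ℝ) 1, s ^ x * ω s)
    (momWW : ℝ → ℝ)
    (hmomWW : ∀ x, momWW x = ∫ s in Set.Ioc (0:ℝ) 1, s ^ x * (ω s * What s)) :
    (∃ C ≥ (1:ℝ), ∀ r ∈ Set.Ico (0:ℝ) 1,
      (∫ s in Set.Ioc r 1, ω s * What s) ≤
        C * ∫ s in Set.Ioc ((1 + r) / 2) 1, ω s * What s) ∧
    (∃ c > (0:ℝ), ∃ C > (0:ℝ), ∀ x ≥ (1:ℝ),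
      c * (mom x) ^ 2 ≤ momWW x ∧ momWW x ≤ C * (mom x) ^ 2) :=
  stmt_17_general ω hnn hInt What hWhat hD mom hmom momWW hmomWW
end
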